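/- arXiv:1611.04527 — 2 statements merged into one kernel-verified Lean document; each statement's English description precedes it below -/
import Mathlib

section
/- The matrix equation X - AXB = C over a field has a solution X if and only if there exist nonsingular matrices S and R such that [[A, C], [0, I]]·R = S·[[A, 0], [0, I]] and [[I, 0], [0, B]]·R = S·[[I, 0], [0, B]]. -/
/-!
Following Flanders and Wimmer, consider the space `Ω(K)` of all pairs `(S, R)`, invertible or not,
with `[[A, K], [0, I]] R = S [[A, 0], [0, I]]` and `[[I, 0], [0, B]] R = S [[I, 0], [0, B]]`.
An invertible pair in `Ω(C)` maps `Ω(0)` isomorphically onto `Ω(C)` by left multiplication,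
so the two spaces have the same dimension. The projection `(S, R) ↦ (R₂₁, S₂₂)` has the same
kernel on both, and its image on `Ω(C)` lies in its image on `Ω(0)`; counting dimensions, the two
images coincide. The image of `Ω(0)` contains `(0, I)`, and any `(S, R) ∈ Ω(C)` over it yields the
solution `X = S₁₂`.
-/

open Matrix Module Submodule

theorem Submodule.finrank_map_add_finrank_inf_ker {K V W : Type*} [DivisionRing K]
    [AddCommGroup V] [Module K V] [AddCommGroup W] [Module K W] [FiniteDimensional K V]
    (f : V →ₗ[K] W) (p : Submodule K V) :
    finrank K (p.map f) + finrank K ↥(p ⊓ LinearMap.ker f) = finrank K p := by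
  have hker : comap p.subtype (LinearMap.ker f) = comap p.subtype (p ⊓ LinearMap.ker f) := by
    rw [comap_inf, comap_subtype_self, top_inf_eq]
  have h := LinearMap.finrank_range_add_finrank_ker (f.domRestrict p)
  rwa [LinearMap.range_domRestrict, LinearMap.ker_domRestrict, hker,
    (comapSubtypeEquivOfLe (inf_le_left : p ⊓ LinearMap.ker f ≤ p)).finrank_eq] at h

theorem Submodule.map_eq_of_finrank_eq_of_inf_ker_eq {K V W : Type*} [DivisionRing K]
    [AddCommGroup V] [Module K V] [AddCommGroup W] [Module K W] [FiniteDimensional K V]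
    (f : V →ₗ[K] W) {p q : Submodule K V} (hle : p.map f ≤ q.map f)
    (hrank : finrank K p = finrank K q) (hker : p ⊓ LinearMap.ker f = q ⊓ LinearMap.ker f) :
    p.map f = q.map f := by
  refine eq_of_le_of_finrank_eq hle ?_
  have hp := finrank_map_add_finrank_inf_ker f p
  have hq := finrank_map_add_finrank_inf_ker f q
  rw [hker] at hp
  omega

namespace Matrix

section Pencil

variable {F ι : Type*} [Fintype ι]

/-- Invertible members are the strict equivalences between the pencils `M₂ - λ N₂` and
`M₁ - λ N₁`. -/
def pencilIntertwiners [CommRing F] (M₁ N₁ M₂ N₂ : Matrix ι ι F) :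
    Submodule F (Matrix ι ι F × Matrix ι ι F) where
  carrier := {SR | M₁ * SR.2 = SR.1 * M₂ ∧ N₁ * SR.2 = SR.1 * N₂}
  add_mem' := by
    rintro ⟨S, R⟩ ⟨S', R'⟩ ⟨hM, hN⟩ ⟨hM', hN'⟩
    exact ⟨by simp [Matrix.mul_add, Matrix.add_mul, hM, hM'],
      by simp [Matrix.mul_add, Matrix.add_mul, hN, hN']⟩
  zero_mem' := by simp
  smul_mem' := by
    rintro c ⟨S, R⟩ ⟨hM, hN⟩
    exact ⟨by simp [hM], by simp [hN]⟩

@[simp]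
theorem mem_pencilIntertwiners [CommRing F] {M₁ N₁ M₂ N₂ S R : Matrix ι ι F} :
    (S, R) ∈ pencilIntertwiners M₁ N₁ M₂ N₂ ↔ M₁ * R = S * M₂ ∧ N₁ * R = S * N₂ :=
  Iff.rfl

theorem mul_mem_pencilIntertwiners [CommRing F] {M₁ N₁ M₂ N₂ M₃ N₃ S R S' R' : Matrix ι ι F}
    (h : (S, R) ∈ pencilIntertwiners M₁ N₁ M₂ N₂) (h' : (S', R') ∈ pencilIntertwiners M₂ N₂ M₃ N₃) :
    (S * S', R * R') ∈ pencilIntertwiners M₁ N₁ M₃ N₃ := by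
  obtain ⟨hM, hN⟩ := h
  obtain ⟨hM', hN'⟩ := h'
  refine ⟨?_, ?_⟩ <;> simp only [← Matrix.mul_assoc, hM, hN] <;>
    simp only [Matrix.mul_assoc, hM', hN']

theorem inv_mem_pencilIntertwiners [CommRing F] [DecidableEq ι] {M₁ N₁ M₂ N₂ : Matrix ι ι F}
    {S R : (Matrix ι ι F)ˣ}
    (h : ((S : Matrix ι ι F), (R : Matrix ι ι F)) ∈ pencilIntertwiners M₁ N₁ M₂ N₂) :
    ((↑S⁻¹ : Matrix ι ι F), (↑R⁻¹ : Matrix ι ι F)) ∈ pencilIntertwiners M₂ N₂ M₁ N₁ := by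
  obtain ⟨hM, hN⟩ := h
  refine ⟨?_, ?_⟩
  · rw [Units.eq_inv_mul_iff_mul_eq, ← Matrix.mul_assoc, ← hM, Matrix.mul_assoc, Units.mul_inv,
      Matrix.mul_one]
  · rw [Units.eq_inv_mul_iff_mul_eq, ← Matrix.mul_assoc, ← hN, Matrix.mul_assoc, Units.mul_inv,
      Matrix.mul_one]

theorem finrank_pencilIntertwiners_eq [Field F] [DecidableEq ι] {M₁ N₁ M₂ N₂ : Matrix ι ι F}
    (M₃ N₃ : Matrix ι ι F) {S R : (Matrix ι ι F)ˣ}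
    (h : ((S : Matrix ι ι F), (R : Matrix ι ι F)) ∈ pencilIntertwiners M₁ N₁ M₂ N₂) :
    finrank F (pencilIntertwiners M₂ N₂ M₃ N₃) = finrank F (pencilIntertwiners M₁ N₁ M₃ N₃) := by
  let e := (S.mulLeftLinearEquiv F _).prodCongr (R.mulLeftLinearEquiv F _)
  have hmap : (pencilIntertwiners M₂ N₂ M₃ N₃).map (e : _ →ₗ[F] _) =
      pencilIntertwiners M₁ N₁ M₃ N₃ := by
    refine le_antisymm ?_ fun x hx ↦ ?_
    · rintro _ ⟨⟨S', R'⟩, h', rfl⟩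
      exact mul_mem_pencilIntertwiners h h'
    · rw [map_equiv_eq_comap_symm]
      exact mul_mem_pencilIntertwiners (inv_mem_pencilIntertwiners h) hx
  rw [← hmap, LinearEquiv.finrank_map_eq]

end Pencil

section Stein

variable {F m n : Type*} [CommRing F]

def steinProj : Matrix (m ⊕ n) (m ⊕ n) F × Matrix (m ⊕ n) (m ⊕ n) F →ₗ[F]
    Matrix n m F × Matrix n n F where
  toFun SR := (SR.2.toBlocks₂₁, SR.1.toBlocks₂₂)
  map_add' _ _ := rfl
  map_smul' _ _ := rfl

@[simp]
theorem steinProj_apply (S R : Matrix (m ⊕ n) (m ⊕ n) F) :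
    steinProj (S, R) = (R.toBlocks₂₁, S.toBlocks₂₂) :=
  rfl

variable [Fintype m] [Fintype n] [DecidableEq m] [DecidableEq n]

/-- The space `Ω(K)` of the header. -/
abbrev steinIntertwiners (A : Matrix m m F) (B : Matrix n n F) (K : Matrix m n F) :
    Submodule F (Matrix (m ⊕ n) (m ⊕ n) F × Matrix (m ⊕ n) (m ⊕ n) F) :=
  pencilIntertwiners (fromBlocks A K 0 1) (fromBlocks 1 0 0 B) (fromBlocks A 0 0 1)
    (fromBlocks 1 0 0 B)

theorem mem_steinIntertwiners_iff {A : Matrix m m F} {B : Matrix n n F} {K : Matrix m n F}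
    {S R : Matrix (m ⊕ n) (m ⊕ n) F} :
    (S, R) ∈ steinIntertwiners A B K ↔
      (A * R.toBlocks₁₁ + K * R.toBlocks₂₁ = S.toBlocks₁₁ * A ∧
        A * R.toBlocks₁₂ + K * R.toBlocks₂₂ = S.toBlocks₁₂ ∧
        R.toBlocks₂₁ = S.toBlocks₂₁ * A ∧ R.toBlocks₂₂ = S.toBlocks₂₂) ∧
      (R.toBlocks₁₁ = S.toBlocks₁₁ ∧ R.toBlocks₁₂ = S.toBlocks₁₂ * B ∧
        B * R.toBlocks₂₁ = S.toBlocks₂₁ ∧ B * R.toBlocks₂₂ = S.toBlocks₂₂ * B) := by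
  conv_lhs => rw [← fromBlocks_toBlocks S, ← fromBlocks_toBlocks R]
  simp [fromBlocks_multiply]

theorem map_steinProj_le_map_steinProj_zero (A : Matrix m m F) (B : Matrix n n F)
    (K : Matrix m n F) :
    (steinIntertwiners A B K).map steinProj ≤ (steinIntertwiners A B 0).map steinProj := by
  rintro _ ⟨⟨S, R⟩, hSR, rfl⟩
  obtain ⟨⟨-, -, h₂₁, h₂₂⟩, -, -, hB₂₁, hB₂₂⟩ := mem_steinIntertwiners_iff.mp hSR
  refine ⟨(fromBlocks 0 0 (B * R.toBlocks₂₁) S.toBlocks₂₂,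
    fromBlocks 0 0 R.toBlocks₂₁ S.toBlocks₂₂), mem_steinIntertwiners_iff.mpr ?_, by simp⟩
  simp only [toBlocks_fromBlocks₁₁, toBlocks_fromBlocks₁₂, toBlocks_fromBlocks₂₁,
    toBlocks_fromBlocks₂₂]
  refine ⟨⟨by simp, by simp, by rw [hB₂₁]; exact h₂₁, trivial⟩, by simp, by simp, trivial, ?_⟩
  rw [← h₂₂, hB₂₂, h₂₂]

theorem steinIntertwiners_inf_ker_steinProj (A : Matrix m m F) (B : Matrix n n F)
    (K : Matrix m n F) :
    steinIntertwiners A B K ⊓ LinearMap.ker steinProj =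
      steinIntertwiners A B 0 ⊓ LinearMap.ker steinProj := by
  ext ⟨S, R⟩
  simp only [Submodule.mem_inf, LinearMap.mem_ker, steinProj_apply, Prod.mk_eq_zero]
  refine and_congr_left fun ⟨hR₂₁, hS₂₂⟩ ↦ ?_
  rw [mem_steinIntertwiners_iff, mem_steinIntertwiners_iff, hR₂₁, hS₂₂]
  constructor <;> rintro ⟨⟨h₁₁, h₁₂, h₂₁, h₂₂⟩, hN⟩ <;>
    exact ⟨⟨by simpa using h₁₁, by simpa [h₂₂] using h₁₂, h₂₁, h₂₂⟩, hN⟩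

theorem zero_one_mem_map_steinProj_zero (A : Matrix m m F) (B : Matrix n n F) :
    ((0, 1) : Matrix n m F × Matrix n n F) ∈ (steinIntertwiners A B 0).map steinProj :=
  ⟨(fromBlocks 0 0 0 1, fromBlocks 0 0 0 1), by simp [fromBlocks_multiply], by simp⟩

theorem sub_mul_mul_eq_of_mem_steinIntertwiners {A : Matrix m m F} {B : Matrix n n F}
    {C : Matrix m n F} {S R : Matrix (m ⊕ n) (m ⊕ n) F} (hSR : (S, R) ∈ steinIntertwiners A B C)
    (hS₂₂ : S.toBlocks₂₂ = 1) :
    S.toBlocks₁₂ - A * S.toBlocks₁₂ * B = C := by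
  obtain ⟨⟨-, h₁₂, -, h₂₂⟩, -, hB₁₂, -⟩ := mem_steinIntertwiners_iff.mp hSR
  rw [h₂₂, hS₂₂, hB₁₂, Matrix.mul_one, ← Matrix.mul_assoc] at h₁₂
  exact sub_eq_iff_eq_add'.mpr h₁₂.symm

theorem mem_steinIntertwiners_of_sub_mul_mul_eq {A : Matrix m m F} {B : Matrix n n F}
    {C X : Matrix m n F} (hX : X - A * X * B = C) :
    (fromBlocks 1 X 0 1, fromBlocks 1 (X * B) 0 1) ∈ steinIntertwiners A B C := by
  rw [mem_steinIntertwiners_iff]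
  simp only [toBlocks_fromBlocks₁₁, toBlocks_fromBlocks₁₂, toBlocks_fromBlocks₂₁,
    toBlocks_fromBlocks₂₂, Matrix.mul_one, Matrix.one_mul, Matrix.mul_zero, Matrix.zero_mul,
    add_zero, and_true, true_and]
  rw [← hX, ← Matrix.mul_assoc, add_sub_cancel]

end Stein

end Matrix

theorem wimmer_criterion {F : Type*} [Field F] {m n : ℕ}
    (A : Matrix (Fin m) (Fin m) F) (B : Matrix (Fin n) (Fin n) F)
    (C : Matrix (Fin m) (Fin n) F) :
    (∃ X : Matrix (Fin m) (Fin n) F, X - A * X * B = C) ↔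
    (∃ S R : Matrix (Fin m ⊕ Fin n) (Fin m ⊕ Fin n) F, IsUnit S ∧ IsUnit R ∧
      fromBlocks A C 0 1 * R = S * fromBlocks A 0 0 1 ∧
      fromBlocks 1 0 0 B * R = S * fromBlocks 1 0 0 B) := by
  constructor
  · rintro ⟨X, hX⟩
    exact ⟨_, _, by simp [isUnit_iff_isUnit_det], by simp [isUnit_iff_isUnit_det],
      mem_steinIntertwiners_of_sub_mul_mul_eq hX⟩
  · rintro ⟨S₀, R₀, hS₀, hR₀, hM, hN⟩
    have hrank : finrank F (steinIntertwiners A B C) = finrank F (steinIntertwiners A B 0) :=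
      (finrank_pencilIntertwiners_eq (S := hS₀.unit) (R := hR₀.unit) _ _ ⟨hM, hN⟩).symm
    have himage := map_eq_of_finrank_eq_of_inf_ker_eq steinProj
      (map_steinProj_le_map_steinProj_zero A B C) hrank (steinIntertwiners_inf_ker_steinProj A B C)
    obtain ⟨⟨S, R⟩, hSR, hproj⟩ := himage ▸ zero_one_mem_map_steinProj_zero A B
    exact ⟨S.toBlocks₁₂, sub_mul_mul_eq_of_mem_steinIntertwiners hSR (congrArg Prod.snd hproj)⟩
end

section
/- Let σ be an involutive automorphism of ℍ, extended entrywise to matrices (X̂ denotes entrywise application of σ). The quaternion matrix equation X - A·X̂·B = C has a solution if and only if there exist nonsingular quaternion matrices S and R such that [[A, C], [0, I]]·R = Ŝ·[[A, 0], [0, I]] and [[I, 0], [0, B]]·R = S·[[I, 0], [0, B]]. -/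
/-!
Every ring automorphism `σ` of `ℍ` is `ℝ`-linear, because it preserves the centre `ℝ` and `ℝ` has
no ring endomorphism but the identity. Hence the pairs `(S, R)` satisfying the two relations with
right-hand side `C` form a real vector space `W_C` (`Matrix.wimmerSpace`). If `W_C` contains an
invertible pair `(S₀, R₀)`, left multiplication by it maps `W_0` isomorphically onto `W_C`, so
both spaces have the same dimension. Project a pair onto the lower block row `(S₂₁, S₂₂)` of `S`:
`W_C` and `W_0` meet the kernel of this projection in the same subspace, and the image of `W_C`
lies in that of `W_0`, so by rank–nullity the two images are equal. Since `(I, I) ∈ W_0`, the row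
`(0, I)` is the projection of some `(S, R) ∈ W_C`, and then `Y = S₁₂` satisfies `Ŷ - A Y B = C`;
put `X = Ŷ`.
-/

open Matrix Quaternion
open Module

namespace Quaternion

theorem eq_coe_re_of_mem_center {x : ℍ[ℝ]} (hx : x ∈ Set.center ℍ[ℝ]) : x = x.re := by
  obtain ⟨i, hi⟩ : ∃ i : ℍ[ℝ], i.re = 0 ∧ i.imI = 1 ∧ i.imJ = 0 ∧ i.imK = 0 :=
    ⟨⟨0, 1, 0, 0⟩, rfl, rfl, rfl, rfl⟩
  obtain ⟨j, hj⟩ : ∃ j : ℍ[ℝ], j.re = 0 ∧ j.imI = 0 ∧ j.imJ = 1 ∧ j.imK = 0 :=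
    ⟨⟨0, 0, 1, 0⟩, rfl, rfl, rfl, rfl⟩
  have hxi := (hx.comm i).eq
  have hxj := (hx.comm j).eq
  rw [Quaternion.ext_iff] at hxi hxj ⊢
  simp only [re_mul, imI_mul, imJ_mul, imK_mul, hi, hj, re_coe, imI_coe, imJ_coe, imK_coe]
    at hxi hxj ⊢
  refine ⟨trivial, ?_, ?_, ?_⟩ <;> linarith

theorem ringEquiv_apply_coe (σ : ℍ[ℝ] ≃+* ℍ[ℝ]) (r : ℝ) : σ r = r := by
  have hcen (s : ℝ) : σ s = (σ s).re :=
    eq_coe_re_of_mem_center (MulEquivClass.apply_mem_center σ (Set.algebraMap_mem_center s))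
  let f : ℝ →+* ℝ :=
    { toFun s := (σ s).re
      map_one' := by simp
      map_zero' := by simp
      map_add' a b := by simp
      map_mul' a b := by
        rw [coe_mul, map_mul, hcen a, hcen b, ← coe_mul, re_coe, re_coe, re_coe] }
  have hf : f r = r := by rw [Subsingleton.elim f (RingHom.id ℝ)]; rfl
  rw [hcen r]
  exact congrArg _ hf

end Quaternion

section TwistedIntertwiners

variable {K E : Type*} [CommSemiring K] [Semiring E] [Algebra K E] (τ : E →ₐ[K] E)

def twistedIntertwiners (a b c d : E) : Submodule K (E × E) where
  carrier := {x | a * x.2 = τ x.1 * b ∧ c * x.2 = x.1 * d}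
  add_mem' := by
    rintro x y ⟨hx₁, hx₂⟩ ⟨hy₁, hy₂⟩
    refine ⟨?_, ?_⟩ <;>
      simp only [Prod.fst_add, Prod.snd_add, mul_add, add_mul, map_add, hx₁, hx₂, hy₁, hy₂]
  zero_mem' := by simp
  smul_mem' k x := by
    rintro ⟨hx₁, hx₂⟩
    refine ⟨?_, ?_⟩ <;>
      simp only [Prod.smul_fst, Prod.smul_snd, mul_smul_comm, smul_mul_assoc, map_smul, hx₁, hx₂]

variable {τ}

theorem mem_twistedIntertwiners {a b c d : E} {x : E × E} :
    x ∈ twistedIntertwiners τ a b c d ↔ a * x.2 = τ x.1 * b ∧ c * x.2 = x.1 * d :=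
  Iff.rfl

theorem one_mem_twistedIntertwiners (b d : E) : 1 ∈ twistedIntertwiners τ b b d d := by
  simp [mem_twistedIntertwiners]

theorem mul_mem_twistedIntertwiners {a b c d e f : E} {x y : E × E}
    (hx : x ∈ twistedIntertwiners τ a b c d) (hy : y ∈ twistedIntertwiners τ b e d f) :
    x * y ∈ twistedIntertwiners τ a e c f := by
  obtain ⟨hx₁, hx₂⟩ := hx
  obtain ⟨hy₁, hy₂⟩ := hy
  constructor
  · rw [Prod.snd_mul, Prod.fst_mul, map_mul, ← mul_assoc, hx₁, mul_assoc, hy₁, mul_assoc]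
  · rw [Prod.snd_mul, Prod.fst_mul, ← mul_assoc, hx₂, mul_assoc, hy₂, mul_assoc]

theorem inv_mem_twistedIntertwiners {a b c d : E} {u : (E × E)ˣ}
    (hu : ↑u ∈ twistedIntertwiners τ a b c d) : ↑u⁻¹ ∈ twistedIntertwiners τ b a d c := by
  obtain ⟨⟨s, r⟩, ⟨s', r'⟩, hmul_inv, hinv_mul⟩ := u
  obtain ⟨hu₁, hu₂⟩ := hu
  obtain ⟨hs, -⟩ := Prod.mk_eq_one.mp hinv_mul
  obtain ⟨-, hr⟩ := Prod.mk_eq_one.mp hmul_inv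
  dsimp only at hu₁ hu₂ ⊢
  constructor
  · calc b * r' = τ (s' * s) * b * r' := by rw [hs, map_one, one_mul]
      _ = τ s' * (a * (r * r')) := by
        rw [map_mul, mul_assoc (τ s'), ← hu₁]; simp only [mul_assoc]
      _ = τ s' * a := by rw [hr, mul_one]
  · calc d * r' = s' * s * d * r' := by rw [hs, one_mul]
      _ = s' * (c * (r * r')) := by rw [mul_assoc s', ← hu₂]; simp only [mul_assoc]
      _ = s' * c := by rw [hr, mul_one]

theorem twistedIntertwiners_eq_map_mulLeft {a b c d : E} {u : (E × E)ˣ}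
    (hu : ↑u ∈ twistedIntertwiners τ a b c d) :
    twistedIntertwiners τ a b c d =
      (twistedIntertwiners τ b b d d).map (u.mulLeftLinearEquiv K (E × E) : E × E →ₗ[K] E × E) := by
  ext x
  rw [Submodule.mem_map_equiv, Units.symm_mulLeftLinearEquiv_apply]
  constructor
  · exact mul_mem_twistedIntertwiners (inv_mem_twistedIntertwiners hu)
  · intro hx
    simpa using mul_mem_twistedIntertwiners hu hx

end TwistedIntertwiners

namespace Submodule

variable {K V W : Type*} [DivisionRing K] [AddCommGroup V] [Module K V] [FiniteDimensional K V]
  [AddCommGroup W] [Module K W]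

theorem finrank_map_add_finrank_inf_ker_s12 (f : V →ₗ[K] W) (P : Submodule K V) :
    finrank K (P.map f) + finrank K (P ⊓ LinearMap.ker f : Submodule K V) = finrank K P := by
  have h := LinearMap.finrank_range_add_finrank_ker (f.domRestrict P)
  rwa [LinearMap.range_domRestrict, LinearMap.ker_domRestrict,
    (equivMapOfInjective _ P.injective_subtype _).finrank_eq, map_comap_subtype] at h

theorem map_eq_of_map_le_of_finrank_eq_of_inf_ker_eq (f : V →ₗ[K] W) {P Q : Submodule K V}
    (hle : P.map f ≤ Q.map f) (hrank : finrank K P = finrank K Q)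
    (hker : P ⊓ LinearMap.ker f = Q ⊓ LinearMap.ker f) : P.map f = Q.map f := by
  refine eq_of_le_of_finrank_le hle ?_
  have hP := finrank_map_add_finrank_inf_ker_s12 f P
  have hQ := finrank_map_add_finrank_inf_ker_s12 f Q
  rw [hker] at hP
  omega

end Submodule

namespace Matrix

section WimmerSpace

variable {K D : Type*} [CommSemiring K] [Ring D] [Algebra K D]
  {ι κ : Type*} [Fintype ι] [Fintype κ] [DecidableEq ι] [DecidableEq κ]

theorem isUnit_fromBlocks_one_zero_one (Y : Matrix ι κ D) :
    IsUnit (fromBlocks 1 Y 0 1 : Matrix (ι ⊕ κ) (ι ⊕ κ) D) := by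
  refine ⟨⟨fromBlocks 1 Y 0 1, fromBlocks 1 (-Y) 0 1, ?_, ?_⟩, rfl⟩ <;>
  · simp [fromBlocks_multiply, fromBlocks_one]

variable (σ : D →ₐ[K] D)

def wimmerSpace (A : Matrix ι ι D) (B : Matrix κ κ D) (C : Matrix ι κ D) :
    Submodule K (Matrix (ι ⊕ κ) (ι ⊕ κ) D × Matrix (ι ⊕ κ) (ι ⊕ κ) D) :=
  twistedIntertwiners σ.mapMatrix (fromBlocks A C 0 1) (fromBlocks A 0 0 1)
    (fromBlocks 1 0 0 B) (fromBlocks 1 0 0 B)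

variable (K) in
@[simps]
def fstLowerBlocks :
    (Matrix (ι ⊕ κ) (ι ⊕ κ) D × Matrix (ι ⊕ κ) (ι ⊕ κ) D) →ₗ[K] Matrix κ ι D × Matrix κ κ D where
  toFun p := (p.1.toBlocks₂₁, p.1.toBlocks₂₂)
  map_add' _ _ := rfl
  map_smul' _ _ := rfl

variable {σ} {A : Matrix ι ι D} {B : Matrix κ κ D} {C : Matrix ι κ D}

theorem mem_wimmerSpace_iff {S R : Matrix (ι ⊕ κ) (ι ⊕ κ) D} :
    (S, R) ∈ wimmerSpace σ A B C ↔
      (A * R.toBlocks₁₁ + C * R.toBlocks₂₁ = S.toBlocks₁₁.map σ * A ∧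
        A * R.toBlocks₁₂ + C * R.toBlocks₂₂ = S.toBlocks₁₂.map σ ∧
        R.toBlocks₂₁ = S.toBlocks₂₁.map σ * A ∧ R.toBlocks₂₂ = S.toBlocks₂₂.map σ) ∧
      (R.toBlocks₁₁ = S.toBlocks₁₁ ∧ R.toBlocks₁₂ = S.toBlocks₁₂ * B ∧
        B * R.toBlocks₂₁ = S.toBlocks₂₁ ∧ B * R.toBlocks₂₂ = S.toBlocks₂₂ * B) := by
  rw [wimmerSpace, mem_twistedIntertwiners, AlgHom.mapMatrix_apply,
    ← fromBlocks_toBlocks R, ← fromBlocks_toBlocks S, fromBlocks_map,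
    fromBlocks_multiply, fromBlocks_multiply, fromBlocks_multiply, fromBlocks_multiply]
  simp only [toBlocks_fromBlocks₁₁, toBlocks_fromBlocks₁₂, toBlocks_fromBlocks₂₁,
    toBlocks_fromBlocks₂₂, Matrix.zero_mul, Matrix.mul_zero, Matrix.one_mul, Matrix.mul_one,
    add_zero, zero_add, fromBlocks_inj]

theorem fromBlocks_mem_wimmerSpace (Y : Matrix ι κ D) :
    (fromBlocks 1 Y 0 1, fromBlocks 1 (Y * B) 0 1) ∈
      wimmerSpace σ A B (Y.map σ - A * Y * B) := by
  simp [mem_wimmerSpace_iff, Matrix.mul_assoc]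

theorem wimmerSpace_inf_ker_eq :
    wimmerSpace σ A B C ⊓ LinearMap.ker (fstLowerBlocks K) =
      wimmerSpace σ A B 0 ⊓ LinearMap.ker (fstLowerBlocks K) := by
  ext ⟨S, R⟩
  simp only [Submodule.mem_inf, mem_wimmerSpace_iff, LinearMap.mem_ker, fstLowerBlocks_apply,
    Prod.mk_eq_zero]
  -- on the kernel, `R₂₁ = Ŝ₂₁ A = 0` and `R₂₂ = Ŝ₂₂ = 0`, so the terms involving `C` vanish
  constructor <;> rintro ⟨⟨⟨h₁, h₂, h₃, h₄⟩, h₅⟩, hS₂₁, hS₂₂⟩ <;> simp_all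

theorem map_wimmerSpace_le :
    (wimmerSpace σ A B C).map (fstLowerBlocks K) ≤
      (wimmerSpace σ A B 0).map (fstLowerBlocks K) := by
  rintro _ ⟨⟨S, R⟩, hSR, rfl⟩
  obtain ⟨⟨-, -, h₃, h₄⟩, -, -, h₇, h₈⟩ := mem_wimmerSpace_iff.mp hSR
  refine ⟨(fromBlocks 0 0 S.toBlocks₂₁ S.toBlocks₂₂, fromBlocks 0 0 R.toBlocks₂₁ R.toBlocks₂₂),
    mem_wimmerSpace_iff.mpr ?_, ?_⟩
  · simp only [toBlocks_fromBlocks₁₁, toBlocks_fromBlocks₁₂, toBlocks_fromBlocks₂₁,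
      toBlocks_fromBlocks₂₂]
    exact ⟨⟨by simp, by simp, h₃, h₄⟩, by simp, by simp, h₇, h₈⟩
  · simp

theorem map_sub_mul_mul_eq_of_mem_wimmerSpace {S R : Matrix (ι ⊕ κ) (ι ⊕ κ) D}
    (h : (S, R) ∈ wimmerSpace σ A B C) (hS₂₂ : S.toBlocks₂₂ = 1) :
    S.toBlocks₁₂.map σ - A * S.toBlocks₁₂ * B = C := by
  obtain ⟨⟨-, h₂, -, h₄⟩, -, h₆, -, -⟩ := mem_wimmerSpace_iff.mp h
  rw [h₄, hS₂₂, Matrix.map_one _ (map_zero σ) (map_one σ), Matrix.mul_one, h₆] at h₂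
  rw [← h₂, Matrix.mul_assoc, add_sub_cancel_left]

end WimmerSpace

variable {K D : Type*} [Field K] [Ring D] [Algebra K D] [FiniteDimensional K D]
  {ι κ : Type*} [Fintype ι] [Fintype κ] [DecidableEq ι] [DecidableEq κ]

theorem exists_map_sub_mul_mul_eq_of_isUnit {σ : D →ₐ[K] D} {A : Matrix ι ι D}
    {B : Matrix κ κ D} {C : Matrix ι κ D} {S R : Matrix (ι ⊕ κ) (ι ⊕ κ) D}
    (hS : IsUnit S) (hR : IsUnit R) (h : (S, R) ∈ wimmerSpace σ A B C) :
    ∃ Y : Matrix ι κ D, Y.map σ - A * Y * B = C := by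
  obtain ⟨u, hu⟩ := (Prod.isUnit_iff (x := (S, R))).mpr ⟨hS, hR⟩
  rw [← hu] at h
  have hrank : finrank K (wimmerSpace σ A B C) = finrank K (wimmerSpace σ A B 0) := by
    rw [wimmerSpace, twistedIntertwiners_eq_map_mulLeft h, LinearEquiv.finrank_map_eq]
    rfl
  have himage : (wimmerSpace σ A B C).map (fstLowerBlocks K) =
      (wimmerSpace σ A B 0).map (fstLowerBlocks K) :=
    Submodule.map_eq_of_map_le_of_finrank_eq_of_inf_ker_eq _ map_wimmerSpace_le hrank
      wimmerSpace_inf_ker_eq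
  have hlower : ((0 : Matrix κ ι D), (1 : Matrix κ κ D)) ∈
      (wimmerSpace σ A B 0).map (fstLowerBlocks K) :=
    ⟨1, one_mem_twistedIntertwiners _ _, by simp [← fromBlocks_one]⟩
  rw [← himage] at hlower
  obtain ⟨⟨S', R'⟩, hS'R', hS'⟩ := hlower
  exact ⟨_, map_sub_mul_mul_eq_of_mem_wimmerSpace hS'R' (congrArg Prod.snd hS')⟩

theorem exists_map_sub_mul_mul_eq_iff (σ : D →ₐ[K] D) (A : Matrix ι ι D) (B : Matrix κ κ D)
    (C : Matrix ι κ D) :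
    (∃ Y : Matrix ι κ D, Y.map σ - A * Y * B = C) ↔
      ∃ S R : Matrix (ι ⊕ κ) (ι ⊕ κ) D, IsUnit S ∧ IsUnit R ∧
        fromBlocks A C 0 1 * R = S.map σ * fromBlocks A 0 0 1 ∧
        fromBlocks 1 0 0 B * R = S * fromBlocks 1 0 0 B := by
  constructor
  · rintro ⟨Y, rfl⟩
    exact ⟨_, _, isUnit_fromBlocks_one_zero_one Y, isUnit_fromBlocks_one_zero_one _,
      fromBlocks_mem_wimmerSpace Y⟩
  · rintro ⟨S, R, hS, hR, h⟩
    exact exists_map_sub_mul_mul_eq_of_isUnit hS hR h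

end Matrix

theorem wimmer_quaternion_twisted {m n : ℕ} (σ : ℍ[ℝ] ≃+* ℍ[ℝ])
    (hinv : ∀ h : ℍ[ℝ], σ (σ h) = h)
    (A : Matrix (Fin m) (Fin m) ℍ[ℝ]) (B : Matrix (Fin n) (Fin n) ℍ[ℝ])
    (C : Matrix (Fin m) (Fin n) ℍ[ℝ]) :
    (∃ X : Matrix (Fin m) (Fin n) ℍ[ℝ], X - A * X.map σ * B = C) ↔
    (∃ S R : Matrix (Fin m ⊕ Fin n) (Fin m ⊕ Fin n) ℍ[ℝ], IsUnit S ∧ IsUnit R ∧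
      fromBlocks A C 0 1 * R = S.map σ * fromBlocks A 0 0 1 ∧
      fromBlocks 1 0 0 B * R = S * fromBlocks 1 0 0 B) := by
  have hmap : Function.Involutive fun X : Matrix (Fin m) (Fin n) ℍ[ℝ] => X.map σ := fun X => by
    simp [Matrix.map_map, Function.comp_def, hinv]
  rw [hmap.surjective.exists]
  simp only [hmap _]
  exact exists_map_sub_mul_mul_eq_iff (AlgEquiv.ofRingEquiv (ringEquiv_apply_coe σ)).toAlgHom A B C
end
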